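/- arXiv:1809.04224 — 5 statements merged into one kernel-verified Lean document; each statement's English description precedes it below -/
import Mathlib

section
/- Let p and q be real numbers with 0 < p < 1/2 and 1 - p ≤ q ≤ 1. Consider pairs (x, y) ∈ [0,1]×[0,1], where x = Pr[σ⁺ | g = 0] and y = Pr[σ⁺ | g = 1], that satisfy the university's non-negative-utility constraint x·(q·(1-p) - p·(1-q)) ≤ y·(p·q - (1-p)·(1-q)), and define the school's utility f(x,y) = y·(p·q + (1-p)·(1-q)) + x·(p·(1-q) + (1-p)·q). Then the pair x* = (p + q - 1)/(q - p), y* = 1 satisfies x* ∈ [0,1], satisfies the constraint, and maximizes f: for every feasible pair (x,y), f(x,y) ≤ f(x*, y*). -/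
/-!
The constraint coefficients simplify to `q(1-p) - p(1-q) = q - p > 0` and
`pq - (1-p)(1-q) = p + q - 1 ≥ 0`, so the constraint reads `x ≤ y·x* ≤ x*`. Both coefficients
of `f` are non-negative, hence `f` is largest at `y = 1`, `x = x*`, where the constraint is tight.
-/

lemma div_mem_Icc_zero_one {c d : ℝ} (hc : 0 < c) (hd : 0 ≤ d) (hdc : d ≤ c) :
    d / c ∈ Set.Icc 0 1 :=
  ⟨div_nonneg hd hc.le, div_le_one_of_le₀ hdc hc.le⟩

lemma add_mul_le_of_mul_le_mul {a b c d x y : ℝ} (ha : 0 ≤ a) (hb : 0 ≤ b) (hc : 0 < c)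
    (hd : 0 ≤ d) (hy : y ≤ 1) (h : x * c ≤ y * d) :
    y * a + x * b ≤ a + d / c * b := by
  have hx : x ≤ d / c := by
    rw [le_div_iff₀ hc]
    calc x * c ≤ y * d := h
      _ ≤ 1 * d := mul_le_mul_of_nonneg_right hy hd
      _ = d := one_mul d
  calc y * a + x * b ≤ 1 * a + d / c * b := by gcongr
    _ = a + d / c * b := by rw [one_mul]

theorem opt_signaling_no_test_general (p q : ℝ) (hp : p < 1/2)
    (hq1 : 1 - p ≤ q) (hq2 : q ≤ 1) :
    (0 ≤ (p + q - 1)/(q - p) ∧ (p + q - 1)/(q - p) ≤ 1) ∧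
    ((p + q - 1)/(q - p)) * (q * (1 - p) - p * (1 - q)) ≤
      1 * (p * q - (1 - p) * (1 - q)) ∧
    ∀ x y : ℝ, 0 ≤ x → x ≤ 1 → 0 ≤ y → y ≤ 1 →
      x * (q * (1 - p) - p * (1 - q)) ≤ y * (p * q - (1 - p) * (1 - q)) →
      y * (p * q + (1 - p) * (1 - q)) + x * (p * (1 - q) + (1 - p) * q) ≤
        1 * (p * q + (1 - p) * (1 - q)) +
          ((p + q - 1)/(q - p)) * (p * (1 - q) + (1 - p) * q) := by
  have hsub : q * (1 - p) - p * (1 - q) = q - p := by ring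
  have hadd : p * q - (1 - p) * (1 - q) = p + q - 1 := by ring
  have hqp : 0 < q - p := by linarith
  have hpq : 0 ≤ p + q - 1 := by linarith
  have hp0 : 0 ≤ p := by linarith
  have hq0 : 0 ≤ q := by linarith
  have hA : 0 ≤ p * q + (1 - p) * (1 - q) :=
    add_nonneg (mul_nonneg hp0 hq0) (mul_nonneg (by linarith) (by linarith))
  have hB : 0 ≤ p * (1 - q) + (1 - p) * q :=
    add_nonneg (mul_nonneg hp0 (by linarith)) (mul_nonneg (by linarith) hq0)
  simp only [hsub, hadd, one_mul]
  exact ⟨div_mem_Icc_zero_one hqp hpq (by linarith), (div_mul_cancel₀ _ hqp.ne').le,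
    fun x y _ _ _ hy h => add_mul_le_of_mul_le_mul hA hB hqp hpq hy h⟩

/-- Theorem (optimal signaling scheme, no test): with x = Pr[σ⁺|g=0] and
y = Pr[σ⁺|g=1], the pair (x*, y*) = ((p+q-1)/(q-p), 1) is feasible and maximizes
the school's utility f(x,y) = y·(pq + (1-p)(1-q)) + x·(p(1-q) + (1-p)q) over all
feasible pairs. -/
theorem opt_signaling_no_test (p q : ℝ) (hp0 : 0 < p) (hp : p < 1/2)
    (hq1 : 1 - p ≤ q) (hq2 : q ≤ 1) :
    (0 ≤ (p + q - 1)/(q - p) ∧ (p + q - 1)/(q - p) ≤ 1) ∧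
    ((p + q - 1)/(q - p)) * (q * (1 - p) - p * (1 - q)) ≤
      1 * (p * q - (1 - p) * (1 - q)) ∧
    ∀ x y : ℝ, 0 ≤ x → x ≤ 1 → 0 ≤ y → y ≤ 1 →
      x * (q * (1 - p) - p * (1 - q)) ≤ y * (p * q - (1 - p) * (1 - q)) →
      y * (p * q + (1 - p) * (1 - q)) + x * (p * (1 - q) + (1 - p) * q) ≤
        1 * (p * q + (1 - p) * (1 - q)) +
          ((p + q - 1)/(q - p)) * (p * (1 - q) + (1 - p) * q) :=
  opt_signaling_no_test_general p q hp hq1 hq2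
end

section
/- Let p, q, q' be real numbers with 0 < p < 1/2 and 1 - p ≤ q' < q ≤ 1. Then U_s(p,q') ≤ U_s(p,q) ≤ (1/(1-p))·U_s(p,q'): greater grade accuracy benefits a strategic school, but increases its utility by a factor of at most 1/(1-p). -/
/-!
Away from `q = p`, `U_s p q = 2p(1-p)(2 - (1-2p)/(q-p))`, which is monotone in `q > p`
when `0 ≤ p ≤ 1/2`. Hence on `[1-p, 1]` the utility ranges between its endpoint values
`U_s p (1-p) = 2p(1-p)` and `U_s p 1 = 2p`, whose ratio is `1/(1-p)`.
-/

noncomputable def U_s (p q : ℝ) : ℝ := 1 + (p + q - 2 * p * q) * (2 * p - 1) / (q - p)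

theorem U_s_eq {p q : ℝ} (hqp : q ≠ p) :
    U_s p q = 2 * p * (1 - p) * (2 - (1 - 2 * p) / (q - p)) := by
  have : q - p ≠ 0 := sub_ne_zero.mpr hqp
  unfold U_s
  field_simp
  ring

theorem U_s_monotoneOn {p : ℝ} (hp0 : 0 ≤ p) (hp : p ≤ 1 / 2) :
    MonotoneOn (U_s p) (Set.Ioi p) := by
  intro q' hq' q hq hq'q
  rw [U_s_eq (ne_of_gt hq'), U_s_eq (ne_of_gt hq)]
  have hq'p : 0 < q' - p := sub_pos.mpr hq'
  gcongr
  · nlinarith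
  · linarith

theorem U_s_one {p : ℝ} (hp : p ≠ 1) : U_s p 1 = 2 * p := by
  have : 1 - p ≠ 0 := sub_ne_zero.mpr hp.symm
  unfold U_s
  field_simp
  ring

theorem U_s_one_sub {p : ℝ} (hp : p ≠ 1 / 2) : U_s p (1 - p) = 2 * p * (1 - p) := by
  have : 1 - p - p ≠ 0 := by contrapose! hp; linarith
  unfold U_s
  field_simp
  ring

/-- Greater grade accuracy benefits a strategic school, by a factor of at most
1/(1-p): U_s(p,q') ≤ U_s(p,q) ≤ (1/(1-p))·U_s(p,q') for 1-p ≤ q' < q ≤ 1. -/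
theorem accuracy_benefits_strategic (p q q' : ℝ) (hp0 : 0 < p) (hp : p < 1/2)
    (hq'1 : 1 - p ≤ q') (hq' : q' < q) (hq2 : q ≤ 1) :
    U_s p q' ≤ U_s p q ∧ U_s p q ≤ (1 / (1 - p)) * U_s p q' := by
  have hmono := U_s_monotoneOn hp0.le hp.le
  have hp1 : 0 < 1 - p := by linarith
  have mem : ∀ x, 1 - p ≤ x → x ∈ Set.Ioi p := fun x hx => by
    simp only [Set.mem_Ioi]; linarith
  refine ⟨hmono (mem q' hq'1) (mem q (by linarith)) hq'.le, ?_⟩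
  calc U_s p q ≤ U_s p 1 := hmono (mem q (by linarith)) (mem 1 (by linarith)) hq2
    _ = 1 / (1 - p) * U_s p (1 - p) := by
      rw [U_s_one (by linarith), U_s_one_sub hp.ne]
      field_simp
    _ ≤ 1 / (1 - p) * U_s p q' := by
      gcongr
      exact hmono (mem (1 - p) le_rfl) (mem q' hq'1) hq'1
end

section
/- Let p and q be real numbers with 0 < p < 1/2 and 1 - p ≤ q ≤ 1. Then U_r(p,q) ≤ U_s(p,q) ≤ 2·U_r(p,q): a strategic school has higher expected utility than a revealing school, but by a factor of at most 2. -/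
/-!
Clearing the denominator, `U_s p q = 2p(1-p)(2q-1)/(q-p)`. Multiplying by `q - p > 0`, the two
bounds become the factorizations
`2p(1-p)(2q-1) - (q-p) U_r = (p+q-1)((1-2p)q+p)` and `(q-p) U_r - p(1-p)(2q-1) = q(1-q)(1-2p)`,
whose factors all have a sign under the hypotheses.
-/

/-- The revealing school's expected utility. -/
noncomputable def U_r (p q : ℝ) : ℝ := p * q + (1 - p) * (1 - q)

theorem U_s_eq_of_ne {p q : ℝ} (h : q ≠ p) :
    U_s p q = 2 * p * (1 - p) * (2 * q - 1) / (q - p) := by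
  rw [U_s, eq_div_iff (sub_ne_zero.mpr h), add_mul, div_mul_cancel₀ _ (sub_ne_zero.mpr h)]
  ring

theorem U_r_le_U_s {p q : ℝ} (hp : p < 1 / 2) (hq : 1 - p ≤ q) : U_r p q ≤ U_s p q := by
  have hpq : p < q := by linarith
  rw [U_s_eq_of_ne hpq.ne', le_div_iff₀ (sub_pos.mpr hpq)]
  have hfactor : 2 * p * (1 - p) * (2 * q - 1) - U_r p q * (q - p)
      = (p + q - 1) * ((1 - 2 * p) * q + p) := by
    rw [U_r]; ring
  have hsecond : 0 ≤ (1 - 2 * p) * q + p := by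
    nlinarith [mul_le_mul_of_nonneg_left hq (by linarith : (0 : ℝ) ≤ 1 - 2 * p)]
  linarith [mul_nonneg (by linarith : (0 : ℝ) ≤ p + q - 1) hsecond]

theorem U_s_le_two_mul_U_r {p q : ℝ} (hp : p ≤ 1 / 2) (hpq : p < q) (hq0 : 0 ≤ q) (hq1 : q ≤ 1) :
    U_s p q ≤ 2 * U_r p q := by
  rw [U_s_eq_of_ne hpq.ne', div_le_iff₀ (sub_pos.mpr hpq)]
  have hfactor : U_r p q * (q - p) - p * (1 - p) * (2 * q - 1) = q * (1 - q) * (1 - 2 * p) := by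
    rw [U_r]; ring
  have hprod : 0 ≤ q * (1 - q) * (1 - 2 * p) :=
    mul_nonneg (mul_nonneg hq0 (sub_nonneg.mpr hq1)) (by linarith)
  linarith

theorem strategic_vs_revealing_utility_general (p q : ℝ) (hp : p < 1/2)
    (hq1 : 1 - p ≤ q) (hq2 : q ≤ 1) :
    U_r p q ≤ U_s p q ∧ U_s p q ≤ 2 * U_r p q :=
  ⟨U_r_le_U_s hp hq1, U_s_le_two_mul_U_r hp.le (by linarith) (by linarith) hq2⟩

/-- A strategic school has higher expected utility than a revealing school,
but by a factor of at most 2: U_r(p,q) ≤ U_s(p,q) ≤ 2·U_r(p,q). -/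
theorem strategic_vs_revealing_utility (p q : ℝ) (hp0 : 0 < p) (hp : p < 1/2)
    (hq1 : 1 - p ≤ q) (hq2 : q ≤ 1) :
    U_r p q ≤ U_s p q ∧ U_s p q ≤ 2 * U_r p q :=
  strategic_vs_revealing_utility_general p q hp hq1 hq2
end

section
/- Let p, q, q' be real numbers with 0 < p < 1/2 and 1 - p ≤ q' < q ≤ 1. Then U_r(p,q) ≤ U_r(p,q') ≤ 2·(1-p)·U_r(p,q): greater grade accuracy harms a revealing school, but decreases its utility by a factor of at most 2·(1-p). -/
/-!
`U_r p` is affine in `q` with slope `2p - 1 ≤ 0`, so it is antitone. Hence on `[1 - p, 1]` it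
lies between its endpoint values `U_r p 1 = p` and `U_r p (1 - p) = 2 (1 - p) p`, whose ratio
is exactly `2 (1 - p)`.
-/

lemma U_r_eq (p q : ℝ) : U_r p q = (1 - p) - (1 - 2 * p) * q := by
  unfold U_r; ring

lemma U_r_antitone {p : ℝ} (hp : p ≤ 1 / 2) : Antitone (U_r p) := by
  intro q q' hqq'
  simp only [U_r_eq]
  nlinarith

lemma U_r_one (p : ℝ) : U_r p 1 = p := by
  unfold U_r; ring

lemma U_r_one_sub (p : ℝ) : U_r p (1 - p) = 2 * (1 - p) * p := by
  unfold U_r; ring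

theorem accuracy_harms_revealing_general (p q q' : ℝ) (hp : p < 1/2)
    (hq'1 : 1 - p ≤ q') (hq' : q' < q) (hq2 : q ≤ 1) :
    U_r p q ≤ U_r p q' ∧ U_r p q' ≤ 2 * (1 - p) * U_r p q := by
  have hU := U_r_antitone hp.le
  refine ⟨hU hq'.le, ?_⟩
  calc U_r p q' ≤ U_r p (1 - p) := hU hq'1
    _ = 2 * (1 - p) * U_r p 1 := by rw [U_r_one_sub, U_r_one]
    _ ≤ 2 * (1 - p) * U_r p q := by
      have : 0 ≤ 1 - p := by linarith
      gcongr
      exact hU hq2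

/-- Greater grade accuracy harms a revealing school, but by a factor of at most
2(1-p): U_r(p,q) ≤ U_r(p,q') ≤ 2·(1-p)·U_r(p,q) for 1-p ≤ q' < q ≤ 1. -/
theorem accuracy_harms_revealing (p q q' : ℝ) (hp0 : 0 < p) (hp : p < 1/2)
    (hq'1 : 1 - p ≤ q') (hq' : q' < q) (hq2 : q ≤ 1) :
    U_r p q ≤ U_r p q' ∧ U_r p q' ≤ 2 * (1 - p) * U_r p q :=
  accuracy_harms_revealing_general p q q' hp hq'1 hq' hq2
end

section
/- Let p and δ be real numbers with 0 < p < 1/2, δ ≤ 1, and p·δ - (1-p)·(1-δ) ≥ 0. Then 1 ≤ (1 - δ + p)/p ≤ 2; that is, with accurate grades (q = 1), the ratio of a strategic school's expected utility U_s(p,1,δ) = 1 - δ + p to a revealing school's expected utility U_r(p,1,δ) = p lies between 1 and 2, so the standardized test does not increase inequality beyond the factor 2 attained without a test. -/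
/-!
The informativeness condition `p δ - (1 - p)(1 - δ) ≥ 0` simplifies to `1 - δ ≤ p`, so the
strategic school's surplus `1 - δ` over the revealing school lies between `0` and `p`.
-/

theorem one_sub_le_of_informative {p δ : ℝ} (h : p * δ - (1 - p) * (1 - δ) ≥ 0) :
    1 - δ ≤ p := by
  have hsimp : p * δ - (1 - p) * (1 - δ) = p - (1 - δ) := by ring
  linarith

theorem add_div_self_mem_Icc {x p : ℝ} (hp : 0 < p) (hx0 : 0 ≤ x) (hxp : x ≤ p) :
    (x + p) / p ∈ Set.Icc 1 2 := by
  have hsplit : (x + p) / p = x / p + 1 := by rw [add_div, div_self hp.ne']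
  have hlo : 0 ≤ x / p := div_nonneg hx0 hp.le
  have hhi : x / p ≤ 1 := (div_le_one hp).2 hxp
  exact ⟨by linarith, by linarith⟩

theorem test_ratio_accurate_grades_general (p δ : ℝ) (hp0 : 0 < p)
    (hδ1 : δ ≤ 1) (hs1 : p * δ - (1 - p) * (1 - δ) ≥ 0) :
    1 ≤ (1 - δ + p) / p ∧ (1 - δ + p) / p ≤ 2 :=
  add_div_self_mem_Icc hp0 (sub_nonneg.2 hδ1) (one_sub_le_of_informative hs1)

/-- With accurate grades (q = 1) and an informative standardized test, the
ratio of a strategic school's utility U_s(p,1,δ) = 1 - δ + p to a revealing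
school's utility U_r(p,1,δ) = p lies between 1 and 2. -/
theorem test_ratio_accurate_grades (p δ : ℝ) (hp0 : 0 < p) (hp : p < 1/2)
    (hδ1 : δ ≤ 1) (hs1 : p * δ - (1 - p) * (1 - δ) ≥ 0) :
    1 ≤ (1 - δ + p) / p ∧ (1 - δ + p) / p ≤ 2 :=
  test_ratio_accurate_grades_general p δ hp0 hδ1 hs1
end
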